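/- Let ν be a Lévy measure with ∫_{|x|≤1} |x|^{α₊} ν(dx) < ∞ for some α₊ ∈ (0,2) and ∫_{|x|>1} e^{(R+1)x} ν(dx) < ∞. Define Υ(u) := (1/Ā) ∫_ℝ (e^{(R−iu)x} − 1)(e^x − 1) ν(dx) where Ā := ∫_ℝ (e^x−1)² ν(dx) ∈ (0,∞). Then there exists C > 0 such that |Υ(u)| ≤ C(1 + |u|^{α₊−1}) for all real u (with the convention that for α₊ ≤ 1 the bound reads |Υ(u)| ≤ C). -/

import Mathlib

/-!
Split `ν` at `|x| = 1`. Near the origin write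
`e^{(R-iu)x} - 1 = e^{Rx}(e^{-iux} - 1) + (e^{Rx} - 1)`; the interpolation
`|e^{-iux} - 1| ≤ min(2, |ux|) ≤ 2|ux|^{α₊-1}` (for `α₊ > 1`) bounds the integrand by a
multiple of `(1 + |u|^{α₊-1}) |x|^{α₊}`, which is integrable there. Away from the origin `ν` is
finite and the integrand is dominated, uniformly in `u`, by `(|e^{Rx} - 1| + 2)|e^x - 1|`. If that
envelope is not integrable, then neither is the integrand for any `u`, and `Υ` vanishes because
the Bochner integral of a non-integrable function is `0`.
-/

open MeasureTheory

theorem Real.abs_exp_sub_one_le_mul_exp_abs (y : ℝ) : |exp y - 1| ≤ |y| * exp |y| := by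
  rcases le_or_gt 0 y with hy | hy
  · rw [abs_of_nonneg (by linarith [add_one_le_exp y]), abs_of_nonneg hy]
    nlinarith [add_one_le_exp (-y), exp_pos y, exp_neg y, mul_inv_cancel₀ (exp_pos y).ne']
  · rw [abs_of_nonpos (by linarith [exp_lt_one_iff.mpr hy]), abs_of_neg hy]
    nlinarith [add_one_le_exp y, one_le_exp (by linarith : (0:ℝ) ≤ -y)]

theorem Real.min_one_le_rpow {t β : ℝ} (ht : 0 ≤ t) (hβ0 : 0 ≤ β) (hβ1 : β ≤ 1) :
    min 1 t ≤ t ^ β := by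
  rcases le_or_gt t 1 with h | h
  · simpa [h] using rpow_le_rpow_of_exponent_ge' ht h hβ0 hβ1
  · exact (min_le_left _ _).trans (one_le_rpow h.le hβ0)

namespace Complex

theorem norm_exp_I_mul_ofReal_sub_one_le_min (t : ℝ) : ‖exp (I * t) - 1‖ ≤ min 2 |t| := by
  refine le_min ?_ (Real.norm_exp_I_mul_ofReal_sub_one_le.trans_eq (Real.norm_eq_abs t))
  calc ‖exp (I * t) - 1‖ ≤ ‖exp (I * t)‖ + ‖(1 : ℂ)‖ := norm_sub_le _ _
    _ = 2 := by rw [norm_exp_I_mul_ofReal, norm_one]; norm_num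

theorem norm_exp_sub_one_le_re_im (z : ℂ) :
    ‖exp z - 1‖ ≤ Real.exp z.re * min 2 |z.im| + |Real.exp z.re - 1| := by
  have hz : exp z - 1 = exp z.re * (exp (I * z.im) - 1) + ((Real.exp z.re - 1 : ℝ) : ℂ) := by
    conv_lhs => rw [← re_add_im z]
    push_cast
    rw [exp_add, mul_comm (z.im : ℂ) I]
    ring
  rw [hz]
  refine (norm_add_le _ _).trans ?_
  rw [norm_mul, norm_real, Real.norm_eq_abs, ← ofReal_exp, norm_real, Real.norm_eq_abs,
    abs_of_pos (Real.exp_pos _)]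
  gcongr
  exact norm_exp_I_mul_ofReal_sub_one_le_min _

theorem abs_exp_re_sub_one_le_norm (z : ℂ) : |Real.exp z.re - 1| ≤ ‖exp z - 1‖ := by
  simpa [norm_exp] using abs_norm_sub_norm_le (exp z) 1

theorem norm_exp_sub_one_le_abs_add_two (z : ℂ) : ‖exp z - 1‖ ≤ |Real.exp z.re - 1| + 2 :=
  calc ‖exp z - 1‖ ≤ ‖exp z‖ + ‖(1 : ℂ)‖ := norm_sub_le _ _
    _ ≤ |Real.exp z.re - 1| + 2 := by
      rw [norm_exp, norm_one]; linarith [le_abs_self (Real.exp z.re - 1)]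

theorem norm_exp_ofReal_sub_one (x : ℝ) : ‖exp (x : ℂ) - 1‖ = |Real.exp x - 1| := by
  rw [← ofReal_exp, ← ofReal_one, ← ofReal_sub, norm_real, Real.norm_eq_abs]

end Complex

noncomputable def rpowWeight (α u : ℝ) : ℝ := if α ≤ 1 then 1 else 1 + |u| ^ (α - 1)

theorem one_le_rpowWeight (α u : ℝ) : 1 ≤ rpowWeight α u := by
  unfold rpowWeight
  split_ifs
  · exact le_rfl
  · linarith [Real.rpow_nonneg (abs_nonneg u) (α - 1)]

theorem mul_rpowWeight (C α u : ℝ) :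
    C * rpowWeight α u = if α ≤ 1 then C else C * (1 + |u| ^ (α - 1)) := by
  unfold rpowWeight
  split_ifs <;> simp

section SmallJumps

variable {α u x : ℝ}

theorem min_two_mul_le_rpowWeight (hα : α ∈ Set.Icc 0 2) (hx : |x| ≤ 1) :
    min 2 (|u| * |x|) * |x| ≤ 2 * rpowWeight α u * |x| ^ α := by
  unfold rpowWeight
  split_ifs with h
  · have hxα : |x| ≤ |x| ^ α := by
      simpa [hx] using Real.min_one_le_rpow (abs_nonneg x) hα.1 h
    nlinarith [min_le_left 2 (|u| * |x|), abs_nonneg x, le_min (zero_le_two : (0:ℝ) ≤ 2)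
      (mul_nonneg (abs_nonneg u) (abs_nonneg x))]
  · have hmin : min 2 (|u| * |x|) ≤ 2 * (|u| ^ (α - 1) * |x| ^ (α - 1)) := by
      rw [← Real.mul_rpow (abs_nonneg u) (abs_nonneg x)]
      calc min 2 (|u| * |x|) ≤ 2 * min 1 (|u| * |x|) := by
            rw [mul_min_of_nonneg _ _ zero_le_two, mul_one]
            exact min_le_min le_rfl (by linarith [mul_nonneg (abs_nonneg u) (abs_nonneg x)])
        _ ≤ _ := by
            gcongr
            exact Real.min_one_le_rpow (by positivity) (by linarith) (by linarith [hα.2])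
    have hxα : |x| ^ (α - 1) * |x| = |x| ^ α := by
      rw [← Real.rpow_add_one' (abs_nonneg x) (by linarith)]; ring_nf
    calc min 2 (|u| * |x|) * |x| ≤ 2 * (|u| ^ (α - 1) * |x| ^ (α - 1)) * |x| := by gcongr
      _ = 2 * |u| ^ (α - 1) * |x| ^ α := by rw [← hxα]; ring
      _ ≤ 2 * (1 + |u| ^ (α - 1)) * |x| ^ α := by gcongr; linarith

theorem mul_self_le_rpowWeight (hα0 : 0 ≤ α) (hα2 : α ≤ 2) (hx : |x| ≤ 1) :
    |x| * |x| ≤ rpowWeight α u * |x| ^ α := by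
  calc |x| * |x| = |x| ^ (2 : ℝ) := by rw [Real.rpow_two, sq]
    _ ≤ |x| ^ α := Real.rpow_le_rpow_of_exponent_ge' (abs_nonneg x) hx hα0 hα2
    _ ≤ rpowWeight α u * |x| ^ α :=
        le_mul_of_one_le_left (by positivity) (one_le_rpowWeight α u)

end SmallJumps

noncomputable def levyIntegrand (R u x : ℝ) : ℂ :=
  (Complex.exp (((R : ℂ) - Complex.I * u) * x) - 1) * (Complex.exp (x : ℂ) - 1)

section LevyIntegrand

variable (R u x : ℝ)

@[simp] theorem levyExponent_re : (((R : ℂ) - Complex.I * u) * x).re = R * x := by simp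

@[simp] theorem levyExponent_im : (((R : ℂ) - Complex.I * u) * x).im = -(u * x) := by simp

theorem continuous_levyIntegrand : Continuous (levyIntegrand R u) := by
  unfold levyIntegrand; fun_prop

theorem abs_mul_abs_le_norm_levyIntegrand :
    |Real.exp (R * x) - 1| * |Real.exp x - 1| ≤ ‖levyIntegrand R u x‖ := by
  rw [levyIntegrand, norm_mul, Complex.norm_exp_ofReal_sub_one]
  gcongr
  simpa using Complex.abs_exp_re_sub_one_le_norm (((R : ℂ) - Complex.I * u) * x)

theorem norm_levyIntegrand_le :
    ‖levyIntegrand R u x‖ ≤ (|Real.exp (R * x) - 1| + 2) * |Real.exp x - 1| := by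
  rw [levyIntegrand, norm_mul, Complex.norm_exp_ofReal_sub_one]
  gcongr
  simpa using Complex.norm_exp_sub_one_le_abs_add_two (((R : ℂ) - Complex.I * u) * x)

variable {R u x}

theorem norm_levyIntegrand_le_of_abs_le_one {α : ℝ} (hα : α ∈ Set.Icc 0 2) (hx : |x| ≤ 1) :
    ‖levyIntegrand R u x‖ ≤ 2 * Real.exp |R| * (2 + |R|) * rpowWeight α u * |x| ^ α := by
  have hRx : |R * x| ≤ |R| := by
    rw [abs_mul]; exact mul_le_of_le_one_right (abs_nonneg R) hx
  have hexp : Real.exp (R * x) ≤ Real.exp |R| :=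
    Real.exp_le_exp.2 ((le_abs_self _).trans hRx)
  have hfirst : ‖Complex.exp (((R : ℂ) - Complex.I * u) * x) - 1‖
      ≤ Real.exp |R| * (min 2 (|u| * |x|) + |R| * |x|) := by
    have h := Complex.norm_exp_sub_one_le_re_im (((R : ℂ) - Complex.I * u) * x)
    rw [levyExponent_re, levyExponent_im, abs_neg, abs_mul] at h
    have hlin : |Real.exp (R * x) - 1| ≤ |R| * |x| * Real.exp |R| := by
      refine (Real.abs_exp_sub_one_le_mul_exp_abs _).trans ?_
      rw [abs_mul] at hRx ⊢; gcongr
    nlinarith [mul_le_mul_of_nonneg_right hexp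
      (le_min zero_le_two (mul_nonneg (abs_nonneg u) (abs_nonneg x)))]
  have hsecond : ‖Complex.exp (x : ℂ) - 1‖ ≤ 2 * |x| := by
    rw [Complex.norm_exp_ofReal_sub_one]; exact Real.abs_exp_sub_one_le hx
  have hmin := min_two_mul_le_rpowWeight (u := u) hα hx
  have hsq := mul_self_le_rpowWeight (u := u) hα.1 hα.2 hx
  calc ‖levyIntegrand R u x‖
      ≤ Real.exp |R| * (min 2 (|u| * |x|) + |R| * |x|) * (2 * |x|) := by
        rw [levyIntegrand, norm_mul]; gcongr
    _ = 2 * Real.exp |R| * (min 2 (|u| * |x|) * |x| + |R| * (|x| * |x|)) := by ring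
    _ ≤ 2 * Real.exp |R| * (2 * rpowWeight α u * |x| ^ α + |R| * (rpowWeight α u * |x| ^ α)) :=
        by gcongr
    _ = 2 * Real.exp |R| * (2 + |R|) * rpowWeight α u * |x| ^ α := by ring

end LevyIntegrand

theorem norm_integral_le_setIntegral_add_setIntegral_compl {α E : Type*} [MeasurableSpace α]
    [NormedAddCommGroup E] [NormedSpace ℝ E] {μ : Measure α} {s : Set α} (hs : MeasurableSet s)
    {f : α → E} (hf : AEStronglyMeasurable f μ) {φ ψ : α → ℝ} (hφ : IntegrableOn φ s μ)
    (hψ : IntegrableOn ψ sᶜ μ) (hfφ : ∀ x ∈ s, ‖f x‖ ≤ φ x) (hfψ : ∀ x ∈ sᶜ, ‖f x‖ ≤ ψ x) :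
    ‖∫ x, f x ∂μ‖ ≤ (∫ x in s, φ x ∂μ) + ∫ x in sᶜ, ψ x ∂μ := by
  have bound_s : ∀ᵐ x ∂μ.restrict s, ‖f x‖ ≤ φ x := (ae_restrict_iff' hs).2 (ae_of_all μ hfφ)
  have bound_compl : ∀ᵐ x ∂μ.restrict sᶜ, ‖f x‖ ≤ ψ x :=
    (ae_restrict_iff' hs.compl).2 (ae_of_all μ hfψ)
  have hfint : Integrable f μ := by
    rw [← integrableOn_univ, ← Set.union_compl_self s]
    exact IntegrableOn.union (hφ.mono' hf.restrict bound_s) (hψ.mono' hf.restrict bound_compl)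
  rw [← integral_add_compl hs hfint]
  exact (norm_add_le _ _).trans (add_le_add (norm_integral_le_of_norm_le hφ bound_s)
    (norm_integral_le_of_norm_le hψ bound_compl))

section LevyMeasure

variable {ν : Measure ℝ}

theorem measure_compl_abs_le_one_lt_top (hmin : Integrable (fun x => min (x ^ 2) 1) ν) :
    ν {x : ℝ | |x| ≤ 1}ᶜ < ⊤ := by
  refine (measure_mono fun x hx => ?_).trans_lt (hmin.measure_ge_lt_top one_pos)
  simp only [Set.mem_compl_iff, Set.mem_ofPred_eq, not_le] at hx ⊢
  exact le_min (by nlinarith [sq_abs x]) le_rfl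

theorem integrableOn_abs_exp_sub_one (hsq : Integrable (fun x => (Real.exp x - 1) ^ 2) ν)
    {s : Set ℝ} (hs : ν s < ⊤) : IntegrableOn (fun x => |Real.exp x - 1|) s ν := by
  refine (hsq.integrableOn.add (integrableOn_const (C := (1 : ℝ)) hs.ne)).mono'
    (by fun_prop : Continuous fun x => |Real.exp x - 1|).aestronglyMeasurable
    (ae_of_all _ fun x => ?_)
  rw [Real.norm_eq_abs, abs_abs, Pi.add_apply]
  nlinarith [sq_abs (Real.exp x - 1), sq_nonneg (|Real.exp x - 1| - 1)]

theorem integrableOn_abs_mul_abs_of_integrable_levyIntegrand {R u : ℝ}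
    (h : Integrable (levyIntegrand R u) ν) (s : Set ℝ) :
    IntegrableOn (fun x => |Real.exp (R * x) - 1| * |Real.exp x - 1|) s ν :=
  h.integrableOn.norm.mono' (by fun_prop) (ae_of_all _ fun x => by
    rw [Real.norm_of_nonneg (by positivity)]
    exact abs_mul_abs_le_norm_levyIntegrand R u x)

theorem exists_norm_integral_levyIntegrand_le {R α : ℝ} (hα : α ∈ Set.Icc 0 2)
    (hsmall : Integrable (fun x => |x| ^ α) (ν.restrict {x : ℝ | |x| ≤ 1}))
    (hmin : Integrable (fun x => min (x ^ 2) 1) ν)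
    (hsq : Integrable (fun x => (Real.exp x - 1) ^ 2) ν)
    (hlarge : IntegrableOn (fun x => |Real.exp (R * x) - 1| * |Real.exp x - 1|)
      {x : ℝ | |x| ≤ 1}ᶜ ν) :
    ∃ M ≥ (0 : ℝ), ∀ u, ‖∫ x, levyIntegrand R u x ∂ν‖ ≤ M * rpowWeight α u := by
  set S := {x : ℝ | |x| ≤ 1}
  have hS : MeasurableSet S := measurableSet_le continuous_abs.measurable measurable_const
  have henv : IntegrableOn (fun x => (|Real.exp (R * x) - 1| + 2) * |Real.exp x - 1|) Sᶜ ν := by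
    refine (hlarge.add ((integrableOn_abs_exp_sub_one hsq
      (measure_compl_abs_le_one_lt_top hmin)).const_mul 2)).congr_fun (fun x _ => ?_) hS.compl
    simp only [Pi.add_apply]; ring
  set K := 2 * Real.exp |R| * (2 + |R|)
  set small := ∫ x in S, |x| ^ α ∂ν
  set large := ∫ x in Sᶜ, (|Real.exp (R * x) - 1| + 2) * |Real.exp x - 1| ∂ν
  have hsmall0 : 0 ≤ small := integral_nonneg fun x => by positivity
  have hlarge0 : 0 ≤ large := integral_nonneg fun x => by positivity
  refine ⟨K * small + large, by positivity, fun u => ?_⟩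
  have h := norm_integral_le_setIntegral_add_setIntegral_compl hS
    (continuous_levyIntegrand R u).aestronglyMeasurable (hsmall.const_mul (K * rpowWeight α u))
    henv (fun x hx => norm_levyIntegrand_le_of_abs_le_one hα hx)
    (fun x _ => norm_levyIntegrand_le R u x)
  rw [integral_const_mul] at h
  nlinarith [one_le_rpowWeight α u]

end LevyMeasure

theorem stmt14_general (R αp : ℝ) (hαp : αp ∈ Set.Ioo (0:ℝ) 2) (ν : Measure ℝ)
    (hmin : Integrable (fun x => min (x ^ 2) 1) ν)
    (hsmall : Integrable (fun x => |x| ^ αp) (ν.restrict {x : ℝ | |x| ≤ 1}))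
    (A : ℝ) (hAint : Integrable (fun x => (Real.exp x - 1) ^ 2) ν)
    (hApos : 0 < A)
    (Υ : ℝ → ℂ)
    (hΥ : ∀ u : ℝ, Υ u = ((1 / A : ℝ) : ℂ) *
      ∫ x : ℝ, (Complex.exp (((R : ℂ) - Complex.I * u) * x) - 1) *
        (Complex.exp (x : ℂ) - 1) ∂ν) :
    ∃ C > (0:ℝ), ∀ u : ℝ,
      ‖Υ u‖ ≤ if αp ≤ 1 then C else C * (1 + |u| ^ (αp - 1)) := by
  have hΥ' : ∀ u, Υ u = ((1 / A : ℝ) : ℂ) * ∫ x, levyIntegrand R u x ∂ν := hΥ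
  by_cases hlarge : IntegrableOn (fun x => |Real.exp (R * x) - 1| * |Real.exp x - 1|)
    {x : ℝ | |x| ≤ 1}ᶜ ν
  · obtain ⟨M, hM0, hM⟩ := exists_norm_integral_levyIntegrand_le
      (Set.Ioo_subset_Icc_self hαp) hsmall hmin hAint hlarge
    refine ⟨M / A + 1, by positivity, fun u => ?_⟩
    rw [← mul_rpowWeight, hΥ' u, norm_mul, Complex.norm_real, Real.norm_of_nonneg (by positivity)]
    calc 1 / A * ‖∫ x, levyIntegrand R u x ∂ν‖ ≤ 1 / A * (M * rpowWeight αp u) := by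
          gcongr; exact hM u
      _ = M / A * rpowWeight αp u := by ring
      _ ≤ (M / A + 1) * rpowWeight αp u :=
          mul_le_mul_of_nonneg_right (by linarith) (zero_le_one.trans (one_le_rpowWeight αp u))
  · refine ⟨1, one_pos, fun u => ?_⟩
    have hnot : ¬Integrable (levyIntegrand R u) ν := fun h =>
      hlarge (integrableOn_abs_mul_abs_of_integrable_levyIntegrand h _)
    rw [hΥ' u, integral_undef hnot, mul_zero, norm_zero]
    split_ifs <;> positivity

/-- Bound on `Υ(u) = (1/Ā)∫(e^{(R−iu)x} − 1)(e^x − 1) ν(dx)`: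
`|Υ(u)| ≤ C(1+|u|^{α₊−1})` (and `|Υ(u)| ≤ C` when `α₊ ≤ 1`). -/
theorem stmt14 (R αp : ℝ) (hαp : αp ∈ Set.Ioo (0:ℝ) 2) (ν : Measure ℝ) (hν0 : ν {0} = 0)
    (hmin : Integrable (fun x => min (x ^ 2) 1) ν)
    (hsmall : Integrable (fun x => |x| ^ αp) (ν.restrict {x : ℝ | |x| ≤ 1}))
    (hbig : Integrable (fun x => Real.exp ((R + 1) * x)) (ν.restrict {x : ℝ | 1 < |x|}))
    (A : ℝ) (hAint : Integrable (fun x => (Real.exp x - 1) ^ 2) ν)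
    (hA : A = ∫ x, (Real.exp x - 1) ^ 2 ∂ν) (hApos : 0 < A)
    (Υ : ℝ → ℂ)
    (hΥ : ∀ u : ℝ, Υ u = ((1 / A : ℝ) : ℂ) *
      ∫ x : ℝ, (Complex.exp (((R : ℂ) - Complex.I * u) * x) - 1) *
        (Complex.exp (x : ℂ) - 1) ∂ν) :
    ∃ C > (0:ℝ), ∀ u : ℝ,
      ‖Υ u‖ ≤ if αp ≤ 1 then C else C * (1 + |u| ^ (αp - 1)) :=
  stmt14_general R αp hαp ν hmin hsmall A hAint hApos Υ hΥ
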